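/- Lemma (automorphisms of a power complex are induced by vertex permutations). Let 𝒦 be a family of subsets of V with ∅ ∈ 𝒦. Then every order-automorphism ρ of the poset (ℱ, ⊆) is induced by a unique permutation g of the vertex set V → N, in the sense that ρ(A) equals the image g(A) for every A ∈ ℱ; this assignment is an isomorphism from the group of order-automorphisms of (ℱ, ⊆) onto the group of those permutations g of V → N for which the image map A ↦ g(A) is a bijection of ℱ onto itself. -/

import Mathlib

/-!
In a family `S` of nonempty sets containing every singleton, the singletons are exactly the
minimal elements, so an order automorphism `ρ` of `(S, ⊆)` permutes them; this defines a
permutation `g` of the points. Since `x ∈ A ↔ {x} ⊆ A`, the automorphism is then recovered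
as `ρ A = g '' A`, and `g` is determined by its action on singletons. The power complex
contains the singletons `∅(ε) = {ε}` as soon as `∅ ∈ 𝒦`.
-/

/-- The face `F(ε)` of the power complex. -/
def face (n v : ℕ) (F : Set (Fin v)) (ε : Fin v → Fin n) : Set (Fin v → Fin n) :=
  {η | ∀ i ∉ F, η i = ε i}

/-- The power complex `n^𝒦`, as a family of subsets of `V → N`. -/
def powerComplex (n v : ℕ) (𝒦 : Set (Set (Fin v))) : Set (Set (Fin v → Fin n)) :=
  {A | ∃ F ∈ 𝒦, ∃ ε : Fin v → Fin n, A = face n v F ε}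

/-- The group of permutations `g` of the vertex set `V → N` for which the image map
`A ↦ g(A)` is a bijection of the family `ℱ` onto itself. -/
def inducingPerms (n v : ℕ) (𝒦 : Set (Set (Fin v))) :
    Subgroup (Equiv.Perm (Fin v → Fin n)) where
  carrier := {g | Set.BijOn (fun A => g '' A) (powerComplex n v 𝒦) (powerComplex n v 𝒦)}
  one_mem' := by
    have h : (fun A : Set (Fin v → Fin n) => ⇑(1 : Equiv.Perm (Fin v → Fin n)) '' A) = id := by
      funext A; simp
    simp only [Set.mem_setOf_eq, h]
    exact Set.bijOn_id _
  mul_mem' := by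
    intro g h hg hh
    have hcomp : (fun A : Set (Fin v → Fin n) => ⇑(g * h) '' A) =
        (fun A : Set (Fin v → Fin n) => ⇑g '' A) ∘ (fun A => ⇑h '' A) := by
      funext A
      simp only [Function.comp_apply, ← Set.image_comp]
      rfl
    simp only [Set.mem_setOf_eq, hcomp]
    exact hg.comp hh
  inv_mem' := by
    intro g hg
    refine Set.BijOn.symm ⟨?_, ?_⟩ hg
    · intro A _
      simp [← Set.image_comp]
    · intro A _
      simp [← Set.image_comp]

namespace SetFamily

variable {X : Type*} {S : Set (Set X)}

noncomputable def imageOrderIso {g : Equiv.Perm X} (hg : Set.BijOn (fun A => g '' A) S S) :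
    S ≃o S where
  toEquiv := hg.equiv _
  map_rel_iff' := Set.image_subset_image_iff g.injective

theorem coe_imageOrderIso_apply {g : Equiv.Perm X} (hg : Set.BijOn (fun A => g '' A) S S)
    (A : S) : (imageOrderIso hg A : Set X) = g '' A :=
  rfl

abbrev pt (hsingleton : ∀ x : X, {x} ∈ S) (x : X) : S := ⟨{x}, hsingleton x⟩

theorem pt_le_iff (hsingleton : ∀ x : X, {x} ∈ S) {x : X} {A : S} :
    pt hsingleton x ≤ A ↔ x ∈ (A : Set X) :=
  Set.singleton_subset_iff

theorem eq_of_forall_apply_eq_image (hsingleton : ∀ x : X, {x} ∈ S) {ρ : S ≃o S}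
    {g g' : Equiv.Perm X} (hg : ∀ A : S, (ρ A : Set X) = g '' A)
    (hg' : ∀ A : S, (ρ A : Set X) = g' '' A) : g = g' := by
  ext x
  have h := (hg (pt hsingleton x)).symm.trans (hg' (pt hsingleton x))
  simpa only [Set.image_singleton, Set.singleton_eq_singleton_iff] using h

theorem isMin_iff_exists_eq_singleton (hsingleton : ∀ x : X, {x} ∈ S)
    (hnonempty : ∀ A ∈ S, A.Nonempty) {A : S} : IsMin A ↔ ∃ x, (A : Set X) = {x} := by
  constructor
  · intro hA
    obtain ⟨x, hx⟩ := hnonempty A A.2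
    exact ⟨x, Set.Subset.antisymm (hA ((pt_le_iff hsingleton).2 hx))
      (Set.singleton_subset_iff.2 hx)⟩
  · rintro ⟨x, hA⟩ B (hBA : (B : Set X) ⊆ A)
    change (A : Set X) ⊆ B
    rw [hA] at hBA ⊢
    obtain ⟨y, hy⟩ := hnonempty B B.2
    rw [← Set.mem_singleton_iff.1 (hBA hy)]
    exact Set.singleton_subset_iff.2 hy

section

variable (hsingleton : ∀ x : X, {x} ∈ S)

theorem exists_apply_pt_eq_singleton (hnonempty : ∀ A ∈ S, A.Nonempty) (ρ : S ≃o S) (x : X) :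
    ∃ y, (ρ (pt hsingleton x) : Set X) = {y} := by
  rw [← isMin_iff_exists_eq_singleton hsingleton hnonempty, ρ.isMin_apply,
    isMin_iff_exists_eq_singleton hsingleton hnonempty]
  exact ⟨x, rfl⟩

variable (hnonempty : ∀ A ∈ S, A.Nonempty)

/-- The point `y` with `ρ {x} = {y}`. -/
noncomputable def pointMap (ρ : S ≃o S) (x : X) : X :=
  (exists_apply_pt_eq_singleton hsingleton hnonempty ρ x).choose

theorem apply_pt (ρ : S ≃o S) (x : X) :
    ρ (pt hsingleton x) = pt hsingleton (pointMap hsingleton hnonempty ρ x) :=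
  Subtype.ext (exists_apply_pt_eq_singleton hsingleton hnonempty ρ x).choose_spec

theorem pointMap_symm_pointMap (ρ : S ≃o S) (x : X) :
    pointMap hsingleton hnonempty ρ.symm (pointMap hsingleton hnonempty ρ x) = x := by
  have h := apply_pt hsingleton hnonempty ρ.symm (pointMap hsingleton hnonempty ρ x)
  rw [← apply_pt hsingleton hnonempty ρ x, ρ.symm_apply_apply] at h
  simpa using congrArg Subtype.val h.symm

noncomputable def pointPerm (ρ : S ≃o S) : Equiv.Perm X where
  toFun := pointMap hsingleton hnonempty ρ
  invFun := pointMap hsingleton hnonempty ρ.symm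
  left_inv := pointMap_symm_pointMap hsingleton hnonempty ρ
  right_inv x := by simpa using pointMap_symm_pointMap hsingleton hnonempty ρ.symm x

theorem apply_eq_image_pointPerm (ρ : S ≃o S) (A : S) :
    (ρ A : Set X) = pointPerm hsingleton hnonempty ρ '' A := by
  ext x
  rw [Equiv.image_eq_preimage_symm, Set.mem_preimage, ← pt_le_iff hsingleton,
    ← ρ.symm_apply_le, apply_pt hsingleton hnonempty, pt_le_iff hsingleton]
  rfl

theorem pointPerm_bijOn (ρ : S ≃o S) :
    Set.BijOn (fun A => pointPerm hsingleton hnonempty ρ '' A) S S := by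
  have hρ := apply_eq_image_pointPerm hsingleton hnonempty ρ
  refine ⟨fun A hA => by simpa only [hρ] using (ρ ⟨A, hA⟩).2,
    (Set.image_injective.2 (Equiv.injective _)).injOn, fun B hB => ?_⟩
  refine ⟨ρ.symm ⟨B, hB⟩, (ρ.symm ⟨B, hB⟩).2, ?_⟩
  simp only [← hρ, ρ.apply_symm_apply]

noncomputable def orderIsoMulEquiv (H : Subgroup (Equiv.Perm X))
    (hH : ∀ g, g ∈ H ↔ Set.BijOn (fun A => g '' A) S S) : (S ≃o S) ≃* H where
  toFun ρ :=
    ⟨pointPerm hsingleton hnonempty ρ, (hH _).2 (pointPerm_bijOn hsingleton hnonempty ρ)⟩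
  invFun g := imageOrderIso ((hH g).1 g.2)
  left_inv ρ := OrderIso.ext <| funext fun A =>
    Subtype.ext (apply_eq_image_pointPerm hsingleton hnonempty ρ A).symm
  right_inv g := Subtype.ext <| eq_of_forall_apply_eq_image hsingleton
    (apply_eq_image_pointPerm hsingleton hnonempty _) (coe_imageOrderIso_apply _)
  map_mul' ρ₁ ρ₂ := Subtype.ext <| eq_of_forall_apply_eq_image hsingleton
    (apply_eq_image_pointPerm hsingleton hnonempty _) fun A => by
      change (ρ₁ (ρ₂ A) : Set X) = _
      rw [apply_eq_image_pointPerm hsingleton hnonempty,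
        apply_eq_image_pointPerm hsingleton hnonempty, Subgroup.coe_mul, Equiv.Perm.coe_mul,
        Set.image_comp]

end

end SetFamily

theorem singleton_mem_powerComplex {n v : ℕ} {𝒦 : Set (Set (Fin v))} (hempty : ∅ ∈ 𝒦)
    (ε : Fin v → Fin n) : {ε} ∈ powerComplex n v 𝒦 :=
  ⟨∅, hempty, ε, by ext η; simp [face, funext_iff, eq_comm]⟩

theorem nonempty_of_mem_powerComplex {n v : ℕ} {𝒦 : Set (Set (Fin v))}
    {A : Set (Fin v → Fin n)} (hA : A ∈ powerComplex n v 𝒦) : A.Nonempty := by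
  obtain ⟨F, -, ε, rfl⟩ := hA
  exact ⟨ε, fun _ _ => rfl⟩

theorem orderAuto_induced_by_vertex_perm (n v : ℕ)
    (𝒦 : Set (Set (Fin v))) (hempty : ∅ ∈ 𝒦) :
    (∀ ρ : (powerComplex n v 𝒦) ≃o (powerComplex n v 𝒦),
      ∃! g : Equiv.Perm (Fin v → Fin n), ∀ A : powerComplex n v 𝒦,
        ((ρ A : Set (Fin v → Fin n))) = g '' A) ∧
    ∃ e : ((powerComplex n v 𝒦) ≃o (powerComplex n v 𝒦)) ≃* (inducingPerms n v 𝒦),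
      ∀ (ρ : (powerComplex n v 𝒦) ≃o (powerComplex n v 𝒦)) (A : powerComplex n v 𝒦),
        ((ρ A : Set (Fin v → Fin n))) = (e ρ : Equiv.Perm (Fin v → Fin n)) '' A := by
  have hsingleton := singleton_mem_powerComplex (n := n) hempty
  have hnonempty : ∀ A ∈ powerComplex n v 𝒦, A.Nonempty :=
    fun _ => nonempty_of_mem_powerComplex
  have hinduced := SetFamily.apply_eq_image_pointPerm hsingleton hnonempty
  refine ⟨fun ρ => ⟨_, hinduced ρ, fun g hg =>
    SetFamily.eq_of_forall_apply_eq_image hsingleton hg (hinduced ρ)⟩, ?_⟩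
  exact ⟨SetFamily.orderIsoMulEquiv hsingleton hnonempty _ fun _ => Iff.rfl, hinduced⟩
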